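/- arXiv:2109.07291 — 2 statements merged into one kernel-verified Lean document; each statement's English description precedes it below -/
import Mathlib

section
/- Let d be a square-free positive integer, p a prime, and (A,B,C) a primitive integer solution of A² + d·B⁶ = C^p with A ≠ 0 and B ≠ 0. If 864·A·B³·(2A² − 25dB⁶)·(16A² − 11dB⁶) = 0, then d = 2, A = ±5, B = ±1. -/
lemma aux_b_sq (B : ℤ) (hB : B ≠ 0) (h : B ^ 6 ∣ 16) : B ^ 2 = 1 := by
  have h1 : B ∣ 16 := (dvd_pow_self B (by norm_num)).trans h
  have h2 : B.natAbs ∣ 16 := by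
    have := Int.natAbs_dvd_natAbs.mpr h1
    simpa using this
  have h3 : B.natAbs ≤ 16 := Nat.le_of_dvd (by norm_num) h2
  have h4 : -16 ≤ B ∧ B ≤ 16 := by omega
  obtain ⟨h4l, h4r⟩ := h4
  interval_cases B <;> revert h <;> decide

theorem stmt_5 (d : ℤ) (hsq : Squarefree d) (hd : 0 < d) (p : ℕ) (hp : p.Prime)
    (A B C : ℤ) (hprim : Int.gcd (Int.gcd A B) C = 1) (hA : A ≠ 0) (hB : B ≠ 0)
    (hsol : A ^ 2 + d * B ^ 6 = C ^ p)
    (hCM : 864 * A * B ^ 3 * (2 * A ^ 2 - 25 * d * B ^ 6) * (16 * A ^ 2 - 11 * d * B ^ 6) = 0) :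
    d = 2 ∧ (A = 5 ∨ A = -5) ∧ (B = 1 ∨ B = -1) := by
  -- A and B are coprime
  have hg : Int.gcd A B = 1 := by
    by_contra h
    obtain ⟨q, hq, hqd⟩ := Nat.exists_prime_and_dvd h
    have hqA : (q : ℤ) ∣ A := (Int.natCast_dvd_natCast.mpr hqd).trans (Int.gcd_dvd_left A B)
    have hqB : (q : ℤ) ∣ B := (Int.natCast_dvd_natCast.mpr hqd).trans (Int.gcd_dvd_right A B)
    have hqCp : (q : ℤ) ∣ C ^ p := by
      rw [← hsol]
      exact dvd_add (Dvd.dvd.pow hqA (by norm_num)) (Dvd.dvd.mul_left (Dvd.dvd.pow hqB (by norm_num)) d)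
    have hqprime : Prime (q : ℤ) := Nat.prime_iff_prime_int.mp hq
    have hqC : (q : ℤ) ∣ C := hqprime.dvd_of_dvd_pow hqCp
    have : (q : ℤ) ∣ (Int.gcd (Int.gcd A B) C : ℤ) :=
      Int.dvd_coe_gcd (Int.natCast_dvd_natCast.mpr hqd) hqC
    rw [hprim] at this
    simp only [Int.natCast_dvd_natCast, Nat.dvd_one] at this
    exact hq.one_lt.ne' this
  have hco : IsCoprime A B := Int.isCoprime_iff_gcd_eq_one.mpr hg
  have hco' : IsCoprime (B ^ 6) (A ^ 2) := hco.symm.pow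
  -- split the vanishing product
  have hsplit : 2 * A ^ 2 - 25 * d * B ^ 6 = 0 ∨ 16 * A ^ 2 - 11 * d * B ^ 6 = 0 := by
    rcases mul_eq_zero.mp hCM with h | h
    · rcases mul_eq_zero.mp h with h | h
      · rcases mul_eq_zero.mp h with h | h
        · rcases mul_eq_zero.mp h with h | h
          · norm_num at h
          · exact absurd h hA
        · exact absurd (pow_eq_zero_iff (n := 3) (by norm_num) |>.mp h) hB
      · exact Or.inl h
    · exact Or.inr h
  rcases hsplit with h | h
  · -- 2 A² = 25 d B⁶
    have heq : 2 * A ^ 2 = 25 * d * B ^ 6 := by linarith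
    have hdvd : B ^ 6 ∣ 2 * A ^ 2 := ⟨25 * d, by linarith [heq]⟩
    have hdvd2 : B ^ 6 ∣ 2 := hco'.dvd_of_dvd_mul_right hdvd
    have hB2 : B ^ 2 = 1 := aux_b_sq B hB (hdvd2.trans (by norm_num))
    have hB6 : B ^ 6 = 1 := by
      have : B ^ 6 = (B ^ 2) ^ 3 := by ring
      rw [this, hB2]; norm_num
    rw [hB6, mul_one] at heq
    -- 2 A² = 25 d, so 5 ∣ A
    have h5 : (5 : ℤ) ∣ A := by
      have hp5 : Prime (5 : ℤ) := by norm_num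
      have hdvd5 : (5 : ℤ) ∣ 2 * A ^ 2 := ⟨5 * d, by linarith⟩
      rcases hp5.dvd_mul.mp hdvd5 with h' | h'
      · norm_num at h'
      · exact hp5.dvd_of_dvd_pow h'
    obtain ⟨a, rfl⟩ := h5
    have hda : d = 2 * a ^ 2 := by nlinarith [heq]
    have ha : IsUnit a := hsq a ⟨2, by rw [hda]; ring⟩
    have hBpm : B = 1 ∨ B = -1 := by
      have h' : (B - 1) * (B + 1) = 0 := by linear_combination hB2
      rcases mul_eq_zero.mp h' with h' | h'
      · exact Or.inl (by omega)
      · exact Or.inr (by omega)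
    rcases Int.isUnit_iff.mp ha with rfl | rfl
    · exact ⟨by rw [hda]; ring, Or.inl (by ring), hBpm⟩
    · exact ⟨by rw [hda]; ring, Or.inr (by ring), hBpm⟩
  · -- 16 A² = 11 d B⁶ : impossible
    exfalso
    have heq : 16 * A ^ 2 = 11 * d * B ^ 6 := by linarith
    have hdvd : B ^ 6 ∣ 16 * A ^ 2 := ⟨11 * d, by linarith [heq]⟩
    have hdvd2 : B ^ 6 ∣ 16 := hco'.dvd_of_dvd_mul_right hdvd
    have hB2 : B ^ 2 = 1 := aux_b_sq B hB hdvd2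
    have hB6 : B ^ 6 = 1 := by
      have : B ^ 6 = (B ^ 2) ^ 3 := by ring
      rw [this, hB2]; norm_num
    rw [hB6, mul_one] at heq
    have h11 : (11 : ℤ) ∣ A := by
      have hp11 : Prime (11 : ℤ) := by norm_num
      have hdvd11 : (11 : ℤ) ∣ 16 * A ^ 2 := ⟨d, by linarith⟩
      rcases hp11.dvd_mul.mp hdvd11 with h' | h'
      · norm_num at h'
      · exact hp11.dvd_of_dvd_pow h'
    obtain ⟨a, rfl⟩ := h11
    have hda : d = 176 * a ^ 2 := by nlinarith [heq]
    have : IsUnit (4 : ℤ) := hsq 4 ⟨11 * a ^ 2, by rw [hda]; ring⟩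
    rcases Int.isUnit_iff.mp this with h' | h' <;> norm_num at h'
end

section
/- Let d be a square-free positive integer and (A,B,C) a primitive non-trivial solution of A² + dB⁶ = C^p. Then the curve Ẽ: Y² = X³ + 3dB²X + 2dA has multiplicative reduction at every prime ℓ > 3 dividing C with ℓ ∤ 6d: i.e., for such ℓ, ℓ divides the discriminant −1728d²C^p but ℓ ∤ c₄ = −2⁴3²dB². -/
theorem stmt_19 (d : ℤ) (hsq : Squarefree d) (hd : 0 < d) (p : ℕ) (hp : p.Prime)
    (A B C : ℤ) (hprim : Int.gcd (Int.gcd A B) C = 1) (hABC : A * B * C ≠ 0)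
    (hsol : A ^ 2 + d * B ^ 6 = C ^ p)
    (ℓ : ℕ) (hℓ : ℓ.Prime) (hℓ3 : 3 < ℓ) (hℓC : (ℓ : ℤ) ∣ C) (hℓ6d : ¬ (ℓ : ℤ) ∣ 6 * d) :
    (ℓ : ℤ) ∣ -1728 * d ^ 2 * C ^ p ∧ ¬ (ℓ : ℤ) ∣ -(2 ^ 4 * 3 ^ 2) * d * B ^ 2 := by
  have hlp : Prime (ℓ : ℤ) := Nat.prime_iff_prime_int.mp hℓ
  constructor
  · exact Dvd.dvd.mul_left (hℓC.trans (dvd_pow_self C hp.ne_zero)) _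
  · intro h
    -- ℓ ∤ 2, ℓ ∤ 3, ℓ ∤ d
    have h2 : ¬ (ℓ:ℤ) ∣ 2 := fun h2 => hℓ6d (h2.trans ⟨3*d, by ring⟩)
    have h3 : ¬ (ℓ:ℤ) ∣ 3 := fun h3 => hℓ6d (h3.trans ⟨2*d, by ring⟩)
    have hdd : ¬ (ℓ:ℤ) ∣ d := fun hdd => hℓ6d (hdd.mul_left 6)
    have hB : (ℓ:ℤ) ∣ B := by
      have : (ℓ:ℤ) ∣ -(2 ^ 4 * 3 ^ 2) * d * B ^ 2 := h
      rcases hlp.dvd_mul.mp this with h1 | h1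
      · rcases hlp.dvd_mul.mp h1 with h1 | h1
        · have : (ℓ:ℤ) ∣ 2 ^ 4 * 3 ^ 2 := (dvd_neg.mp h1)
          rcases hlp.dvd_mul.mp this with h1 | h1
          · exact absurd (hlp.dvd_of_dvd_pow h1) h2
          · exact absurd (hlp.dvd_of_dvd_pow h1) h3
        · exact absurd h1 hdd
      · exact hlp.dvd_of_dvd_pow h1
    have hA : (ℓ:ℤ) ∣ A := by
      have hA2 : (ℓ:ℤ) ∣ A ^ 2 := by
        have : A ^ 2 = C ^ p - d * B ^ 6 := by linarith
        rw [this]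
        exact dvd_sub (hℓC.trans (dvd_pow_self C hp.ne_zero))
          (Dvd.dvd.mul_left ((hB.trans (dvd_pow_self B (by norm_num))) ) d)
      exact hlp.dvd_of_dvd_pow hA2
    have hg : (ℓ:ℤ) ∣ ((Int.gcd (Int.gcd A B) C : ℕ) : ℤ) :=
      Int.dvd_coe_gcd (Int.dvd_coe_gcd hA hB) hℓC
    rw [hprim] at hg
    have : ℓ ∣ 1 := by exact_mod_cast hg
    exact hℓ.ne_one (Nat.dvd_one.mp this)
end
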